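/- No unnecessary drops: In the abstract linear language λ̂_lin, let ae = infer(e). If ae contains a subterm drop Γ_d ae_s with x ∈ Γ_d, then every well-formed annotated term ae′ (i.e., Γ′ ⊩ ae′ for some multiset context Γ′) with erase(ae′) = e also contains a subterm drop Γ_d′ ae_s′ with x ∈ Γ_d′. -/

import Mathlib

/-!
Formalization of the abstract linear language λ̂_lin from "Type Classes for
Lightweight Substructural Types" (Clamp), §4.1.
-/

namespace LamLin

/-- Unannotated terms: variables, abstractions, multiplicative pairs `⊗`, and
additive choices `&`. -/
inductive ETm : Type
| var : String → ETm
| lam : String → ETm → ETm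
| tens : ETm → ETm → ETm
| amp : ETm → ETm → ETm
deriving DecidableEq

/-- Annotated terms: additionally `dup Γ ae` and `drop Γ ae`, where `Γ` is a
multiset of variables. -/
inductive ATm : Type
| var : String → ATm
| lam : String → ATm → ATm
| tens : ATm → ATm → ATm
| amp : ATm → ATm → ATm
| dup : Multiset String → ATm → ATm
| drop : Multiset String → ATm → ATm

/-- Free variables of an unannotated term. -/
def ETm.fv : ETm → Finset String
| .var x => {x}
| .lam x e => e.fv \ {x}
| .tens a b => a.fv ∪ b.fv
| .amp a b => a.fv ∪ b.fv

/-- Free variables of an annotated term; for `dup Γ ae` and `drop Γ ae` this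
includes the variables of `Γ` together with the free variables of `ae`. -/
def ATm.fv : ATm → Finset String
| .var x => {x}
| .lam x a => a.fv \ {x}
| .tens a b => a.fv ∪ b.fv
| .amp a b => a.fv ∪ b.fv
| .dup Γ a => Γ.toFinset ∪ a.fv
| .drop Γ a => Γ.toFinset ∪ a.fv

/-- Well-formedness `Γ ⊩ ae` of an annotated term in a multiset context. -/
inductive WF : Multiset String → ATm → Prop
| var : WF {x} (.var x)
| lam : x ∉ Γ → WF (Γ + {x}) a → WF Γ (.lam x a)
| tens : WF Γ₁ a → WF Γ₂ b → WF (Γ₁ + Γ₂) (.tens a b)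
| amp : WF Γ a → WF Γ b → WF Γ (.amp a b)
| dup : WF (Γ₁ + Γ₂ + Γ₂) a → WF (Γ₁ + Γ₂) (.dup Γ₂ a)
| drop : WF Γ₁ a → WF (Γ₁ + Γ₂) (.drop Γ₂ a)

/-- The dup/drop inference (elaboration) algorithm. -/
def infer : ETm → ATm
| .var x => .var x
| .lam x e =>
    if x ∈ e.fv then .lam x (infer e) else .lam x (.drop {x} (infer e))
| .tens a b => .dup (a.fv ∩ b.fv).val (.tens (infer a) (infer b))
| .amp a b =>
    .amp (.drop (b.fv \ a.fv).val (infer a)) (.drop (a.fv \ b.fv).val (infer b))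

/-- Erasure of dup/drop annotations. -/
def erase : ATm → ETm
| .var x => .var x
| .lam x a => .lam x (erase a)
| .tens a b => .tens (erase a) (erase b)
| .amp a b => .amp (erase a) (erase b)
| .dup _ a => erase a
| .drop _ a => erase a

/-- `Subterm s t`: `s` occurs as a subterm of the annotated term `t`. -/
inductive Subterm : ATm → ATm → Prop
| refl : Subterm a a
| lam : Subterm s a → Subterm s (.lam x a)
| tensL : Subterm s a → Subterm s (.tens a b)
| tensR : Subterm s b → Subterm s (.tens a b)
| ampL : Subterm s a → Subterm s (.amp a b)
| ampR : Subterm s b → Subterm s (.amp a b)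
| dup : Subterm s a → Subterm s (.dup Γ a)
| drop : Subterm s a → Subterm s (.drop Γ a)

/-- `WFSub Γ ae Γₛ aeₛ`: there is a derivation of `Γ ⊩ ae` containing the
judgment `Γₛ ⊩ aeₛ` as a subderivation. -/
inductive WFSub : Multiset String → ATm → Multiset String → ATm → Prop
| refl : WF Γ a → WFSub Γ a Γ a
| lam : x ∉ Γ → WFSub (Γ + {x}) a Γs as → WFSub Γ (.lam x a) Γs as
| tensL : WFSub Γ₁ a Γs as → WF Γ₂ b → WFSub (Γ₁ + Γ₂) (.tens a b) Γs as
| tensR : WF Γ₁ a → WFSub Γ₂ b Γs as → WFSub (Γ₁ + Γ₂) (.tens a b) Γs as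
| ampL : WFSub Γ a Γs as → WF Γ b → WFSub Γ (.amp a b) Γs as
| ampR : WF Γ a → WFSub Γ b Γs as → WFSub Γ (.amp a b) Γs as
| dup : WFSub (Γ₁ + Γ₂ + Γ₂) a Γs as → WFSub (Γ₁ + Γ₂) (.dup Γ₂ a) Γs as
| drop : WFSub Γ₁ a Γs as → WFSub (Γ₁ + Γ₂) (.drop Γ₂ a) Γs as

end LamLin

/-!
`infer` emits a drop of `x` in exactly two situations of the source term: a binder `λx.e'` with
`x ∉ fv e'`, and a choice `e₁ & e₂` in which `x` is free in one branch only (`MustDrop`).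
Any well-formed annotation must drop `x` there as well: in a derivation of `Γ ⊩ ae`, every variable
of `Γ` that is not free in `erase ae` is dropped somewhere in `ae`, and in both situations the
subterm in question is checked in a context containing `x` — the binder itself, resp. the context
shared by the two branches, which contains the free variables of the other branch.
-/

namespace LamLin

inductive MustDrop (x : String) : ETm → Prop
| lamSelf {e} : x ∉ e.fv → MustDrop x (.lam x e)
| lam {y e} : MustDrop x e → MustDrop x (.lam y e)
| tensL {a b} : MustDrop x a → MustDrop x (.tens a b)
| tensR {a b} : MustDrop x b → MustDrop x (.tens a b)
| ampL {a b} : MustDrop x a → MustDrop x (.amp a b)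
| ampR {a b} : MustDrop x b → MustDrop x (.amp a b)
| ampFvL {a b} : x ∈ b.fv → x ∉ a.fv → MustDrop x (.amp a b)
| ampFvR {a b} : x ∈ a.fv → x ∉ b.fv → MustDrop x (.amp a b)

def Drops (x : String) (a : ATm) : Prop :=
  ∃ (Γd : Multiset String) (s : ATm), Subterm (.drop Γd s) a ∧ x ∈ Γd

theorem Subterm.trans {r s t : ATm} (hrs : Subterm r s) (hst : Subterm s t) : Subterm r t := by
  induction hst with
  | refl => exact hrs
  | lam _ ih => exact .lam ih
  | tensL _ ih => exact .tensL ih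
  | tensR _ ih => exact .tensR ih
  | ampL _ ih => exact .ampL ih
  | ampR _ ih => exact .ampR ih
  | dup _ ih => exact .dup ih
  | drop _ ih => exact .drop ih

theorem Drops.of_subterm {x : String} {a b : ATm} (hd : Drops x a) (hab : Subterm a b) :
    Drops x b := by
  obtain ⟨Γd, s, hs, hx⟩ := hd
  exact ⟨Γd, s, hs.trans hab, hx⟩

theorem Drops.drop_self {x : String} {Γ : Multiset String} {a : ATm} (hx : x ∈ Γ) :
    Drops x (.drop Γ a) :=
  ⟨Γ, a, .refl, hx⟩

theorem mustDrop_of_subterm_infer {x : String} {Γd : Multiset String} {s : ATm} {e : ETm}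
    (h : Subterm (.drop Γd s) (infer e)) (hx : x ∈ Γd) : MustDrop x e := by
  induction e with
  | var y => cases h
  | lam y e ih =>
    rw [infer] at h
    split_ifs at h with hfv
    · cases h with
      | lam h => exact .lam (ih h)
    · cases h with
      | lam h =>
        cases h with
        | refl =>
          obtain rfl : x = y := Multiset.mem_singleton.mp hx
          exact .lamSelf hfv
        | drop h => exact .lam (ih h)
  | tens a b iha ihb =>
    cases h with
    | dup h =>
      cases h with
      | tensL h => exact .tensL (iha h)
      | tensR h => exact .tensR (ihb h)
  | amp a b iha ihb =>
    cases h with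
    | ampL h =>
      cases h with
      | refl =>
        obtain ⟨hb, ha⟩ := Finset.mem_sdiff.mp (Finset.mem_val.mp hx)
        exact .ampFvL hb ha
      | drop h => exact .ampL (iha h)
    | ampR h =>
      cases h with
      | refl =>
        obtain ⟨ha, hb⟩ := Finset.mem_sdiff.mp (Finset.mem_val.mp hx)
        exact .ampFvR ha hb
      | drop h => exact .ampR (ihb h)

namespace WF

theorem mem_of_mem_fv_erase {x : String} {Γ : Multiset String} {a : ATm} (h : WF Γ a)
    (hx : x ∈ (erase a).fv) : x ∈ Γ := by
  induction h with
  | var => simpa [erase, ETm.fv] using hx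
  | lam _ _ ih =>
    simp only [erase, ETm.fv, Finset.mem_sdiff, Finset.mem_singleton] at hx
    simpa [hx.2] using ih hx.1
  | tens _ _ ih₁ ih₂ =>
    simp only [erase, ETm.fv, Finset.mem_union] at hx
    exact Multiset.mem_add.mpr (hx.imp ih₁ ih₂)
  | amp _ _ ih₁ ih₂ =>
    simp only [erase, ETm.fv, Finset.mem_union] at hx
    exact hx.elim ih₁ ih₂
  | dup _ ih => simpa using ih hx
  | drop _ ih => exact Multiset.mem_add.mpr (.inl (ih hx))

theorem drops_of_not_mem_fv_erase {x : String} {Γ : Multiset String} {a : ATm} (h : WF Γ a)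
    (hxΓ : x ∈ Γ) (hx : x ∉ (erase a).fv) : Drops x a := by
  induction h with
  | var => simp_all [erase, ETm.fv]
  | @lam _ y _ hy _ ih =>
    have hne : x ≠ y := by rintro rfl; exact hy hxΓ
    simp only [erase, ETm.fv, Finset.mem_sdiff, Finset.mem_singleton, hne, not_false_eq_true,
      and_true] at hx
    exact (ih (Multiset.mem_add.mpr (.inl hxΓ)) hx).of_subterm (.lam .refl)
  | tens _ _ ih₁ ih₂ =>
    simp only [erase, ETm.fv, Finset.mem_union, not_or] at hx
    rcases Multiset.mem_add.mp hxΓ with hx₁ | hx₂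
    · exact (ih₁ hx₁ hx.1).of_subterm (.tensL .refl)
    · exact (ih₂ hx₂ hx.2).of_subterm (.tensR .refl)
  | amp _ _ ih₁ _ =>
    simp only [erase, ETm.fv, Finset.mem_union, not_or] at hx
    exact (ih₁ hxΓ hx.1).of_subterm (.ampL .refl)
  | dup _ ih =>
    exact (ih (Multiset.mem_add.mpr (.inl hxΓ)) hx).of_subterm (.dup .refl)
  | drop _ ih =>
    rcases Multiset.mem_add.mp hxΓ with hx₁ | hx₂
    · exact (ih hx₁ hx).of_subterm (.drop .refl)
    · exact .drop_self hx₂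

theorem drops_of_mustDrop_erase {x : String} {Γ : Multiset String} {a : ATm} (h : WF Γ a)
    (hm : MustDrop x (erase a)) : Drops x a := by
  induction h with
  | var => cases hm
  | lam _ ha ih =>
    cases hm with
    | lamSelf hx => exact (ha.drops_of_not_mem_fv_erase (by simp) hx).of_subterm (.lam .refl)
    | lam hm => exact (ih hm).of_subterm (.lam .refl)
  | tens _ _ ih₁ ih₂ =>
    cases hm with
    | tensL hm => exact (ih₁ hm).of_subterm (.tensL .refl)
    | tensR hm => exact (ih₂ hm).of_subterm (.tensR .refl)
  | amp ha hb iha ihb =>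
    cases hm with
    | ampL hm => exact (iha hm).of_subterm (.ampL .refl)
    | ampR hm => exact (ihb hm).of_subterm (.ampR .refl)
    | ampFvL hxb hxa =>
      exact (ha.drops_of_not_mem_fv_erase (hb.mem_of_mem_fv_erase hxb) hxa).of_subterm
        (.ampL .refl)
    | ampFvR hxa hxb =>
      exact (hb.drops_of_not_mem_fv_erase (ha.mem_of_mem_fv_erase hxa) hxb).of_subterm
        (.ampR .refl)
  | dup _ ih => exact (ih hm).of_subterm (.dup .refl)
  | drop _ ih => exact (ih hm).of_subterm (.drop .refl)

end WF

/-- **No unnecessary drops** (Lemma 11 of the Clamp paper).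
Let `ae = infer(e)`. If `ae` contains a subterm `drop Γ_d ae_s` with
`x ∈ Γ_d`, then every well-formed annotated term `ae′` with
`erase(ae′) = e` also contains a subterm `drop Γ_d′ ae_s′` with
`x ∈ Γ_d′`. -/
theorem no_unnecessary_drops
    {e : ETm} {x : String} {Γd : Multiset String} {aes : ATm}
    (h : Subterm (.drop Γd aes) (infer e)) (hx : x ∈ Γd)
    {ae' : ATm} {Γ' : Multiset String}
    (hwf : WF Γ' ae') (herase : erase ae' = e) :
    ∃ (Γd' : Multiset String) (aes' : ATm),
      Subterm (.drop Γd' aes') ae' ∧ x ∈ Γd' := by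
  have hm : MustDrop x (erase ae') := herase ▸ mustDrop_of_subterm_infer h hx
  exact hwf.drops_of_mustDrop_erase hm

end LamLin
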